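/- If a sequence of real numbers (r_n) contains infinitely many terms strictly above a dyadic rational r and infinitely many terms strictly below r, and converges classically to r, then the s-limit of the sign expansions equals the sign expansion of r itself. -/

import Mathlib

open scoped Classical

noncomputable def slim {L M A : Type*} [LinearOrder L] [LinearOrder M]
    (a : L → M → Option A) : M → Option A := fun m =>
  if h : ∃ l0 : L, ∀ m' ≤ m, ∀ l, l0 ≤ l → ∀ l', l0 ≤ l' →
      a l m' = a l' m' ∧ (a l m').isSome
  then a h.choose m else none

noncomputable def slimIio {A : Type*} (α : Ordinal) (s : Ordinal → Ordinal → Option A) :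
    Ordinal → Option A :=
  slim (L := Set.Iio α) (fun β => s β.1)

abbrev SignStr := Ordinal → Option Bool

def signVal : Option Bool → ℕ
  | none => 1
  | some false => 0
  | some true => 2

def strLT (s t : SignStr) : Prop :=
  ∃ γ, (∀ β < γ, s β = t β) ∧ signVal (s γ) < signVal (t γ)

def strLE (s t : SignStr) : Prop := s = t ∨ strLT s t

noncomputable def ordStr (α : Ordinal) : SignStr := fun γ => if γ < α then some true else none

noncomputable def strLength {A : Type*} (a : Ordinal → Option A) : Ordinal :=
  sInf {γ | a γ = none}

noncomputable def strAppend {A : Type*} (a b : Ordinal → Option A) : Ordinal → Option A :=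
  fun γ => if γ < strLength a then a γ else b (γ - strLength a)

noncomputable def oneOverOmega : SignStr := fun γ =>
  if γ = 0 then some true else if γ < Ordinal.omega0 then some false else none

noncomputable def negOneOverOmega : SignStr := fun γ =>
  if γ = 0 then some false else if γ < Ordinal.omega0 then some true else none

def IsDyadic (x : ℝ) : Prop := ∃ (k : ℤ) (m : ℕ), x = k / 2 ^ m

noncomputable def cand : Option ℝ × Option ℝ → ℝ
  | (none, none) => 0
  | (some l, none) => l + 1
  | (none, some u) => u - 1
  | (some l, some u) => (l + u) / 2

noncomputable def signState (r : ℝ) : ℕ → Option ℝ × Option ℝ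
  | 0 => (none, none)
  | n + 1 =>
      let st := signState r n
      let c := cand st
      if c < r then (some c, st.2)
      else if r < c then (st.1, some c)
      else st

noncomputable def signAt (r : ℝ) (n : ℕ) : Option Bool :=
  let c := cand (signState r n)
  if c < r then some true else if r < c then some false else none

noncomputable def signExp (r : ℝ) : SignStr := fun γ =>
  if h : ∃ n : ℕ, γ = (n : Ordinal) then signAt r h.choose else none

/-! Write `x = K / 2 ^ m`, with `x ≥ 0` by the symmetry `x ↦ -x`. Unless its candidate hits
`x` earlier, the bisection defining the expansion of `x` reaches the bracket `(⌊x⌋, ⌊x⌋ + 1)`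
and then halves it at every step; as `x` cannot lie strictly inside a bracket
`(k / 2 ^ j, (k + 1) / 2 ^ j)` with `j ≥ m`, the candidate hits `x` at some step `N`. Strictly
before `N` every candidate lies at positive distance from `x`; so all `y` close enough to `x`
run through the same states up to step `N` and share the first `N` signs with `x`. At step `N`
the candidate is `x` itself, so the `N`-th sign of `y` is the sign of `y - x`: it takes both
values `+` and `-` infinitely often along the sequence, and the s-limit stops at `N`, exactly
where the expansion of `x` ends. -/

open Filter Topology

section slim

variable {L M A : Type*} [LinearOrder L] [LinearOrder M]

lemma slim_eq_of_eventually_eq [Nonempty L] {a : L → M → Option A} {b : M → Option A} {m : M}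
    (h : ∀ᶠ l in atTop, ∀ m' ≤ m, a l m' = b m') (hb : ∀ m' ≤ m, (b m').isSome) :
    slim a m = b m := by
  obtain ⟨l0, hl0⟩ := eventually_atTop.1 h
  have hstable : ∃ l0 : L, ∀ m' ≤ m, ∀ l, l0 ≤ l → ∀ l', l0 ≤ l' →
      a l m' = a l' m' ∧ (a l m').isSome :=
    ⟨l0, fun m' hm' l hl l' hl' => by
      rw [hl0 l hl m' hm', hl0 l' hl' m' hm']; exact ⟨rfl, hb m' hm'⟩⟩
  rw [slim, dif_pos hstable, (hstable.choose_spec m le_rfl _ le_rfl _ le_sup_left).1,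
    hl0 _ le_sup_right m le_rfl]

lemma slim_eq_none_of_frequently {a : L → M → Option A} {m' m : M} (hm : m' ≤ m)
    {v w : Option A} (hvw : v ≠ w) (hv : ∃ᶠ l in atTop, a l m' = v)
    (hw : ∃ᶠ l in atTop, a l m' = w) : slim a m = none := by
  rw [slim, dif_neg]
  rintro ⟨l0, hl0⟩
  obtain ⟨l, hlv, hl⟩ := (hv.and_eventually (eventually_ge_atTop l0)).exists
  obtain ⟨l', hlw, hl'⟩ := (hw.and_eventually (eventually_ge_atTop l0)).exists
  exact hvw (hlv ▸ hlw ▸ (hl0 m' hm l hl l' hl').1)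

end slim

section signState

variable {x : ℝ} {n : ℕ}

lemma signState_succ (x : ℝ) (n : ℕ) : signState x (n + 1) =
    if cand (signState x n) < x then (some (cand (signState x n)), (signState x n).2)
    else if x < cand (signState x n) then ((signState x n).1, some (cand (signState x n)))
    else signState x n := rfl

lemma signState_bounds (x : ℝ) (n : ℕ) :
    (∀ l ∈ (signState x n).1, l < x) ∧ ∀ u ∈ (signState x n).2, x < u := by
  induction n with
  | zero => simp [signState]
  | succ n ih =>
    rw [signState_succ]
    split_ifs with h₁ h₂
    · exact ⟨by simpa using h₁, ih.2⟩
    · exact ⟨ih.1, by simpa using h₂⟩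
    · exact ih

lemma signState_eq_of_le (h : cand (signState x n) = x) {m : ℕ} (hm : n ≤ m) :
    signState x m = signState x n := by
  induction m, hm using Nat.le_induction with
  | base => rfl
  | succ m _ ih => rw [signState_succ, ih, h, if_neg (lt_irrefl x), if_neg (lt_irrefl x)]

def negState (st : Option ℝ × Option ℝ) : Option ℝ × Option ℝ :=
  (st.2.map Neg.neg, st.1.map Neg.neg)

lemma cand_negState (st : Option ℝ × Option ℝ) : cand (negState st) = -cand st := by
  rcases st with ⟨_ | l, _ | u⟩ <;> simp only [negState, cand, Option.map] <;> ring

lemma signState_neg (x : ℝ) (n : ℕ) : signState (-x) n = negState (signState x n) := by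
  induction n with
  | zero => rfl
  | succ n ih =>
    rw [signState_succ, signState_succ, ih, cand_negState]
    simp only [neg_lt_neg_iff]
    split_ifs <;> first | rfl | (exfalso; linarith)

lemma cand_signState_neg (x : ℝ) (n : ℕ) : cand (signState (-x) n) = -cand (signState x n) := by
  rw [signState_neg, cand_negState]

lemma signState_succ_natCast (h : (n : ℝ) < x) :
    signState x (n + 1) = (some (n : ℝ), none) := by
  induction n with
  | zero => simp only [Nat.cast_zero] at h; simp [signState, cand, h]
  | succ n ih =>
    have hn : (n : ℝ) < x := by push_cast at h; linarith
    have hc : cand (signState x (n + 1)) = ((n + 1 : ℕ) : ℝ) := by rw [ih hn]; push_cast; rfl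
    rw [signState_succ, hc, if_pos h, ih hn]

lemma cand_signState_natCast (h : (n : ℝ) ≤ x) : cand (signState x n) = n := by
  cases n with
  | zero => simp [signState, cand]
  | succ n =>
    rw [signState_succ_natCast (by push_cast at h; linarith)]
    push_cast; rfl

end signState

section bisection

variable {x : ℝ} {n j : ℕ} {k : ℤ}

noncomputable def bracket (j : ℕ) (k : ℤ) : Option ℝ × Option ℝ :=
  (some (k / 2 ^ j), some ((k + 1) / 2 ^ j))

lemma cand_bracket (j : ℕ) (k : ℤ) :
    cand (bracket j k) = ((2 * k + 1 : ℤ) : ℝ) / 2 ^ (j + 1) := by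
  simp only [bracket, cand]; push_cast; rw [pow_succ]; field_simp; ring

lemma signState_succ_of_eq_bracket (h : signState x n = bracket j k)
    (hc : cand (signState x n) ≠ x) : ∃ k', signState x (n + 1) = bracket (j + 1) k' := by
  rw [h, cand_bracket] at hc
  rw [signState_succ, h, cand_bracket]
  rcases hc.lt_or_gt with hlt | hgt
  · refine ⟨2 * k + 1, ?_⟩
    rw [if_pos hlt]
    simp only [bracket, Prod.mk.injEq, true_and, Option.some.injEq]
    push_cast; rw [pow_succ]; field_simp; ring
  · refine ⟨2 * k, ?_⟩
    rw [if_neg hgt.not_gt, if_pos hgt]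
    simp only [bracket, Prod.mk.injEq, Option.some.injEq]
    push_cast; rw [pow_succ]; constructor <;> field_simp

lemma signState_add_eq_bracket (h : signState x n = bracket j k) {t : ℕ}
    (hc : ∀ i < t, cand (signState x (n + i)) ≠ x) :
    ∃ k', signState x (n + t) = bracket (j + t) k' := by
  induction t with
  | zero => exact ⟨k, h⟩
  | succ t ih =>
    obtain ⟨k', hk'⟩ := ih fun i hi => hc i (by omega)
    exact signState_succ_of_eq_bracket hk' (hc t (by omega))

lemma div_two_pow_notMem_Ioo (K : ℤ) {m : ℕ} (hmj : m ≤ j) (k : ℤ) :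
    (K : ℝ) / 2 ^ m ∉ Set.Ioo ((k : ℝ) / 2 ^ j) ((k + 1) / 2 ^ j) := by
  rintro ⟨h₁, h₂⟩
  have hK : (K : ℝ) / 2 ^ m = ((K * 2 ^ (j - m) : ℤ) : ℝ) / 2 ^ j := by
    push_cast
    rw [← Nat.add_sub_cancel' hmj, pow_add, Nat.add_sub_cancel_left]
    field_simp
  rw [hK, div_lt_div_iff_of_pos_right (by positivity)] at h₁ h₂
  norm_cast at h₁ h₂
  omega

lemma IsDyadic.neg (hx : IsDyadic x) : IsDyadic (-x) := by
  obtain ⟨K, m, rfl⟩ := hx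
  exact ⟨-K, m, by push_cast; ring⟩

lemma IsDyadic.exists_cand_signState_eq_of_nonneg (hx : IsDyadic x) (h0 : 0 ≤ x) :
    ∃ n, cand (signState x n) = x := by
  by_contra! hne
  obtain ⟨K, m, hK⟩ := hx
  set p := ⌊x⌋₊
  have hp : (p : ℝ) < x :=
    (Nat.floor_le h0).lt_of_ne fun h => hne p (by rw [cand_signState_natCast h.le, h])
  have hp₁ : x < ((p + 1 : ℕ) : ℝ) := by push_cast; exact Nat.lt_floor_add_one x
  have hstart : signState x (p + 2) = bracket 0 p := by
    have hc : cand (signState x (p + 1)) = ((p + 1 : ℕ) : ℝ) := by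
      rw [signState_succ_natCast hp]; push_cast; rfl
    rw [signState_succ, hc, if_neg hp₁.not_gt, if_pos hp₁, signState_succ_natCast hp]
    simp [bracket]
  obtain ⟨k, hk⟩ := signState_add_eq_bracket hstart (t := m) fun i _ => hne _
  have hbounds := signState_bounds x (p + 2 + m)
  simp only [hk, bracket, Option.mem_def, Option.some.injEq, forall_eq'] at hbounds
  exact div_two_pow_notMem_Ioo K (by omega) k (hK ▸ hbounds)

lemma IsDyadic.exists_cand_signState_eq (hx : IsDyadic x) : ∃ n, cand (signState x n) = x := by
  rcases le_total 0 x with h0 | h0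
  · exact hx.exists_cand_signState_eq_of_nonneg h0
  · obtain ⟨n, hn⟩ := hx.neg.exists_cand_signState_eq_of_nonneg (neg_nonneg.2 h0)
    exact ⟨n, by rw [← neg_neg x, cand_signState_neg, hn]⟩

end bisection

section continuity

variable {x y : ℝ} {n N : ℕ}

lemma eventually_lt_iff_and_gt_iff {c : ℝ} (hc : c ≠ x) :
    ∀ᶠ y in 𝓝 x, (c < y ↔ c < x) ∧ (y < c ↔ x < c) := by
  rcases hc.lt_or_gt with h | h
  · filter_upwards [lt_mem_nhds h] with y hy
    exact ⟨iff_of_true hy h, iff_of_false hy.not_gt h.not_gt⟩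
  · filter_upwards [gt_mem_nhds h] with y hy
    exact ⟨iff_of_false hy.not_gt h.not_gt, iff_of_true hy h⟩

lemma signState_succ_congr (hs : signState y n = signState x n)
    (h₁ : cand (signState x n) < y ↔ cand (signState x n) < x)
    (h₂ : y < cand (signState x n) ↔ x < cand (signState x n)) :
    signState y (n + 1) = signState x (n + 1) := by
  simp only [signState_succ, hs, h₁, h₂]

lemma signAt_congr (hs : signState y n = signState x n)
    (h₁ : cand (signState x n) < y ↔ cand (signState x n) < x)
    (h₂ : y < cand (signState x n) ↔ x < cand (signState x n)) :
    signAt y n = signAt x n := by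
  simp only [signAt, hs, h₁, h₂]

lemma eventually_signState_eq (hN : ∀ m < N, cand (signState x m) ≠ x) :
    ∀ᶠ y in 𝓝 x, ∀ m ≤ N, signState y m = signState x m := by
  induction N with
  | zero => exact .of_forall fun y m hm => by rw [Nat.le_zero.1 hm]; rfl
  | succ N ih =>
    filter_upwards [ih fun m hm => hN m (by omega),
      eventually_lt_iff_and_gt_iff (hN N (by omega))] with y hy hc m hm
    rcases Nat.le_succ_iff.1 hm with hm | rfl
    · exact hy m hm
    · exact signState_succ_congr (hy N le_rfl) hc.1 hc.2

lemma eventually_signAt_eq (hN : ∀ m < N, cand (signState x m) ≠ x) :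
    ∀ᶠ y in 𝓝 x, ∀ m < N, signAt y m = signAt x m := by
  have hc := (Set.finite_Iio N).eventually_all.2 fun m hm =>
    eventually_lt_iff_and_gt_iff (hN m hm)
  filter_upwards [eventually_signState_eq hN, hc] with y hs hc m hm
  exact signAt_congr (hs m hm.le) (hc m hm).1 (hc m hm).2

end continuity

section signExp

variable {x y : ℝ} {n N : ℕ}

lemma signAt_isSome (h : cand (signState x n) ≠ x) : (signAt x n).isSome := by
  rcases h.lt_or_gt with h | h <;> simp [signAt, h, h.not_gt]

lemma signAt_eq_none_of_le (h : cand (signState x N) = x) (hn : N ≤ n) : signAt x n = none := by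
  simp [signAt, signState_eq_of_le h hn, h]

lemma signAt_of_lt (hs : signState y N = signState x N) (h : cand (signState x N) = x)
    (hxy : x < y) : signAt y N = some true := by
  simp [signAt, hs, h, hxy]

lemma signAt_of_gt (hs : signState y N = signState x N) (h : cand (signState x N) = x)
    (hyx : y < x) : signAt y N = some false := by
  simp [signAt, hs, h, hyx, hyx.not_gt]

lemma signExp_natCast (x : ℝ) (n : ℕ) : signExp x n = signAt x n := by
  have h : ∃ m : ℕ, (n : Ordinal) = m := ⟨n, rfl⟩
  rw [signExp, dif_pos h, ← Nat.cast_inj.1 h.choose_spec]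

lemma exists_natCast_eq_of_lt_natCast {γ : Ordinal} (h : γ < N) : ∃ n < N, γ = n := by
  obtain ⟨n, rfl⟩ := Ordinal.eq_natCast_of_le_natCast h.le
  exact ⟨n, Nat.cast_lt.1 h, rfl⟩

lemma signExp_eq_none_of_le (h : cand (signState x N) = x) {γ : Ordinal} (hγ : N ≤ γ) :
    signExp x γ = none := by
  rw [signExp]
  split_ifs with hn
  · exact signAt_eq_none_of_le h (Nat.cast_le.1 (hn.choose_spec ▸ hγ))
  · rfl

end signExp

open Filter Topology in
/-- If a sequence of reals converging classically to a dyadic rational `x` has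
infinitely many terms strictly above `x` and infinitely many terms strictly below `x`, then the
s-limit of the sign expansions equals the sign expansion of `x` itself. -/
theorem slim_signExp_of_tendsto_dyadic_oscillating (r : ℕ → ℝ) (x : ℝ)
    (hconv : Tendsto r atTop (𝓝 x)) (hx : IsDyadic x)
    (habove : ∃ᶠ n in atTop, x < r n) (hbelow : ∃ᶠ n in atTop, r n < x) :
    slim (fun n => signExp (r n)) = signExp x := by
  obtain ⟨N, hN, hlt⟩ : ∃ N, cand (signState x N) = x ∧ ∀ m < N, cand (signState x m) ≠ x :=
    ⟨_, Nat.find_spec hx.exists_cand_signState_eq, fun m => Nat.find_min _⟩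
  have hstate := hconv.eventually (eventually_signState_eq hlt)
  have hsign := hconv.eventually (eventually_signAt_eq hlt)
  funext γ
  rcases lt_or_ge γ N with hγ | hγ
  · refine slim_eq_of_eventually_eq ?_ fun γ' hγ' => ?_
    · filter_upwards [hsign] with l hl γ' hγ'
      obtain ⟨m, hm, rfl⟩ := exists_natCast_eq_of_lt_natCast (hγ'.trans_lt hγ)
      rw [signExp_natCast, signExp_natCast, hl m hm]
    · obtain ⟨m, hm, rfl⟩ := exists_natCast_eq_of_lt_natCast (hγ'.trans_lt hγ)
      rw [signExp_natCast]
      exact signAt_isSome (hlt m hm)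
  · rw [signExp_eq_none_of_le hN hγ]
    refine slim_eq_none_of_frequently hγ (v := some true) (w := some false) (by simp)
      ((habove.and_eventually hstate).mono fun l hl => ?_)
      ((hbelow.and_eventually hstate).mono fun l hl => ?_)
    · rw [signExp_natCast, signAt_of_lt (hl.2 N le_rfl) hN hl.1]
    · rw [signExp_natCast, signAt_of_gt (hl.2 N le_rfl) hN hl.1]
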